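/- Consider a 3-layer network (one hidden layer): T(x) = R₂(A₂ R₁(A₁ x + b₁) + b₂), where R₁ is componentwise a 1/2-averaged operator (R₁ = (1/2)Id + (1/2)Q with Q 1-Lipschitz componentwise) and R₂ is componentwise 1-Lipschitz. With weighted 1-norms ‖·‖^0, ‖·‖^1, ‖·‖^2 on the layers, T is Lipschitz from ‖·‖^0 to ‖·‖^2 with constant (1/2)(‖A₂A₁‖^{0,2} + ‖A₂‖^{1,2}·‖A₁‖^{0,1}). -/

import Mathlib

/-- The weighted 1-norm `‖x‖ = Σ_i w_i |x_i|`. -/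
def wnorm {m : ℕ} (w : Fin m → ℝ) (x : Fin m → ℝ) : ℝ := ∑ i, w i * |x i|

/-- The operator norm of a matrix between weighted-1-normed spaces, defined as the
supremum of `‖Mx‖ / ‖x‖` over nonzero `x`. -/
noncomputable def opNormW {mk ml : ℕ} (wk : Fin mk → ℝ) (wl : Fin ml → ℝ)
    (M : Matrix (Fin ml) (Fin mk) ℝ) : ℝ :=
  sSup {r : ℝ | ∃ x : Fin mk → ℝ, x ≠ 0 ∧ r = wnorm wl (M.mulVec x) / wnorm wk x}

/-!
Write `u = A₁x + b₁` and `u' = A₁x' + b₁`. Since `R₁ = ½ Id + ½ Q`, the difference of hidden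
activations is `½ (u - u') + ½ q` with `|q_j| ≤ |(u - u')_j| = |(A₁(x - x'))_j|`. After applying
`A₂` the first half is `½ A₂A₁(x - x')`, which is measured by `‖A₂A₁‖` directly; only the
second half pays the product `‖A₂‖·‖A₁‖`. The 1-Lipschitz output activation `R₂` does not
increase the weighted 1-norm of the difference.
-/

open Matrix

section WeightedNorm

variable {m : ℕ} {w : Fin m → ℝ}

lemma wnorm_nonneg (hw : ∀ i, 0 ≤ w i) (x : Fin m → ℝ) : 0 ≤ wnorm w x :=
  Finset.sum_nonneg fun i _ => mul_nonneg (hw i) (abs_nonneg _)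

lemma wnorm_pos (hw : ∀ i, 0 < w i) {x : Fin m → ℝ} (hx : x ≠ 0) : 0 < wnorm w x := by
  obtain ⟨j, hj⟩ := Function.ne_iff.mp hx
  exact Finset.sum_pos' (fun i _ => mul_nonneg (hw i).le (abs_nonneg _))
    ⟨j, Finset.mem_univ j, mul_pos (hw j) (abs_pos.2 hj)⟩

lemma wnorm_mono (hw : ∀ i, 0 ≤ w i) {x y : Fin m → ℝ} (h : ∀ i, |x i| ≤ |y i|) :
    wnorm w x ≤ wnorm w y :=
  Finset.sum_le_sum fun i _ => mul_le_mul_of_nonneg_left (h i) (hw i)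

lemma wnorm_add_le (hw : ∀ i, 0 ≤ w i) (x y : Fin m → ℝ) :
    wnorm w (x + y) ≤ wnorm w x + wnorm w y := by
  rw [wnorm, wnorm, wnorm, ← Finset.sum_add_distrib]
  refine Finset.sum_le_sum fun i _ => ?_
  rw [← mul_add]
  exact mul_le_mul_of_nonneg_left (abs_add_le _ _) (hw i)

lemma wnorm_smul (c : ℝ) (x : Fin m → ℝ) : wnorm w (c • x) = |c| * wnorm w x := by
  simp only [wnorm, Pi.smul_apply, smul_eq_mul, abs_mul, Finset.mul_sum]
  exact Finset.sum_congr rfl fun i _ => by ring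

lemma wnorm_map_sub_le (hw : ∀ i, 0 ≤ w i) {f : ℝ → ℝ}
    (hf : ∀ a a', |f a - f a'| ≤ |a - a'|) (y y' : Fin m → ℝ) :
    wnorm w (fun i => f (y i) - f (y' i)) ≤ wnorm w (y - y') :=
  wnorm_mono hw fun i => hf (y i) (y' i)

end WeightedNorm

section OperatorNorm

variable {mk ml : ℕ} {wk : Fin mk → ℝ} {wl : Fin ml → ℝ}

lemma wnorm_mulVec_le_sum_colNorm (hwl : ∀ i, 0 ≤ wl i) (M : Matrix (Fin ml) (Fin mk) ℝ)
    (x : Fin mk → ℝ) :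
    wnorm wl (M *ᵥ x) ≤ ∑ j, (∑ i, wl i * |M i j|) * |x j| :=
  calc wnorm wl (M *ᵥ x) ≤ ∑ i, ∑ j, wl i * (|M i j| * |x j|) := by
        refine Finset.sum_le_sum fun i _ => ?_
        rw [← Finset.mul_sum]
        refine mul_le_mul_of_nonneg_left ?_ (hwl i)
        refine (Finset.abs_sum_le_sum_abs (fun j => M i j * x j) Finset.univ).trans_eq ?_
        simp only [abs_mul]
    _ = ∑ j, (∑ i, wl i * |M i j|) * |x j| := by
        rw [Finset.sum_comm]
        simp only [Finset.sum_mul, mul_assoc]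

lemma bddAbove_wnorm_mulVec_div (hwk : ∀ j, 0 < wk j) (hwl : ∀ i, 0 ≤ wl i)
    (M : Matrix (Fin ml) (Fin mk) ℝ) :
    BddAbove {r : ℝ | ∃ x : Fin mk → ℝ, x ≠ 0 ∧ r = wnorm wl (M.mulVec x) / wnorm wk x} := by
  set colNorm : Fin mk → ℝ := fun j => ∑ i, wl i * |M i j|
  have hcol : ∀ j, 0 ≤ colNorm j / wk j := fun j =>
    div_nonneg (Finset.sum_nonneg fun i _ => mul_nonneg (hwl i) (abs_nonneg _)) (hwk j).le
  refine ⟨∑ j, colNorm j / wk j, ?_⟩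
  rintro r ⟨x, hx, rfl⟩
  rw [div_le_iff₀ (wnorm_pos hwk hx), show wnorm wk x = ∑ j, wk j * |x j| from rfl,
    Finset.mul_sum]
  refine (wnorm_mulVec_le_sum_colNorm hwl M x).trans (Finset.sum_le_sum fun j _ => ?_)
  rw [← mul_assoc]
  refine mul_le_mul_of_nonneg_right ?_ (abs_nonneg _)
  rw [← div_le_iff₀ (hwk j)]
  exact Finset.single_le_sum (fun j _ => hcol j) (Finset.mem_univ j)

lemma opNormW_nonneg (hwk : ∀ j, 0 ≤ wk j) (hwl : ∀ i, 0 ≤ wl i)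
    (M : Matrix (Fin ml) (Fin mk) ℝ) : 0 ≤ opNormW wk wl M := by
  apply Real.sSup_nonneg
  rintro r ⟨x, -, rfl⟩
  exact div_nonneg (wnorm_nonneg hwl _) (wnorm_nonneg hwk _)

lemma wnorm_mulVec_le_opNormW (hwk : ∀ j, 0 < wk j) (hwl : ∀ i, 0 ≤ wl i)
    (M : Matrix (Fin ml) (Fin mk) ℝ) (x : Fin mk → ℝ) :
    wnorm wl (M *ᵥ x) ≤ opNormW wk wl M * wnorm wk x := by
  rcases eq_or_ne x 0 with rfl | hx
  · simp [wnorm]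
  · rw [← div_le_iff₀ (wnorm_pos hwk hx)]
    exact le_csSup (bddAbove_wnorm_mulVec_div hwk hwl M) ⟨x, hx, rfl⟩

end OperatorNorm

lemma exists_map_sub_eq_of_averaged {Q : ℝ → ℝ} (hQ : ∀ a a' : ℝ, |Q a - Q a'| ≤ |a - a'|)
    {R : ℝ → ℝ} (hR : ∀ a : ℝ, R a = (1 / 2) * a + (1 / 2) * Q a) {m : ℕ}
    (u u' : Fin m → ℝ) :
    ∃ q : Fin m → ℝ, (∀ j, |q j| ≤ |(u - u') j|) ∧
      (fun j => R (u j)) - (fun j => R (u' j)) = (1 / 2 : ℝ) • (u - u') + (1 / 2 : ℝ) • q := by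
  refine ⟨fun j => Q (u j) - Q (u' j), fun j => hQ (u j) (u' j), ?_⟩
  funext j
  simp only [Pi.sub_apply, Pi.add_apply, Pi.smul_apply, smul_eq_mul, hR]
  ring

/-- Averaged-operator Lipschitz bound for a 3-layer network (one hidden layer):
if the hidden activation `R₁ = (1/2)Id + (1/2)Q` is componentwise 1/2-averaged
(`Q` 1-Lipschitz) and the output activation `R₂` is componentwise 1-Lipschitz, then
`T(x) = R₂(A₂ R₁(A₁ x + b₁) + b₂)` is Lipschitz from `‖·‖⁰` to `‖·‖²` with constant
`(1/2)(‖A₂A₁‖^{0,2} + ‖A₂‖^{1,2}·‖A₁‖^{0,1})`. -/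
theorem stmt_9 (m0 m1 m2 : ℕ)
    (A1 : Matrix (Fin m1) (Fin m0) ℝ) (A2 : Matrix (Fin m2) (Fin m1) ℝ)
    (b1 : Fin m1 → ℝ) (b2 : Fin m2 → ℝ)
    (Q : ℝ → ℝ) (hQ : ∀ a a' : ℝ, |Q a - Q a'| ≤ |a - a'|)
    (R1 : ℝ → ℝ) (hR1 : ∀ a : ℝ, R1 a = (1 / 2) * a + (1 / 2) * Q a)
    (R2 : ℝ → ℝ) (hR2 : ∀ a a' : ℝ, |R2 a - R2 a'| ≤ |a - a'|)
    (w0 : Fin m0 → ℝ) (w1 : Fin m1 → ℝ) (w2 : Fin m2 → ℝ)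
    (hw0 : ∀ i, 0 < w0 i) (hw1 : ∀ i, 0 < w1 i) (hw2 : ∀ i, 0 < w2 i)
    (T : (Fin m0 → ℝ) → Fin m2 → ℝ)
    (hT : ∀ x, T x = fun i =>
      R2 (A2.mulVec (fun j => R1 (A1.mulVec x j + b1 j)) i + b2 i)) :
    ∀ x x' : Fin m0 → ℝ,
      wnorm w2 (T x - T x') ≤
        (1 / 2) * (opNormW w0 w2 (A2 * A1) + opNormW w1 w2 A2 * opNormW w0 w1 A1) *
          wnorm w0 (x - x') := by
  intro x x'
  have hw1' : ∀ i, 0 ≤ w1 i := fun i => (hw1 i).le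
  have hw2' : ∀ i, 0 ≤ w2 i := fun i => (hw2 i).le
  set u : Fin m1 → ℝ := fun j => (A1 *ᵥ x) j + b1 j
  set u' : Fin m1 → ℝ := fun j => (A1 *ᵥ x') j + b1 j
  have hu : u - u' = A1 *ᵥ (x - x') := by
    funext j
    simp only [u, u', Pi.sub_apply, mulVec_sub]
    ring
  obtain ⟨q, hq, hv⟩ := exists_map_sub_eq_of_averaged hQ hR1 u u'
  have hq_le : wnorm w1 q ≤ opNormW w0 w1 A1 * wnorm w0 (x - x') :=
    (wnorm_mono hw1' (hu ▸ hq)).trans (wnorm_mulVec_le_opNormW hw0 hw1' A1 _)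
  have hout : wnorm w2 (T x - T x') ≤
      wnorm w2 ((1 / 2 : ℝ) • (A2 * A1) *ᵥ (x - x') + (1 / 2 : ℝ) • A2 *ᵥ q) :=
    calc wnorm w2 (T x - T x')
        ≤ wnorm w2 ((A2 *ᵥ fun j => R1 (u j)) + b2 - ((A2 *ᵥ fun j => R1 (u' j)) + b2)) := by
          rw [hT, hT]
          exact wnorm_map_sub_le hw2' hR2 _ _
      _ = _ := by
          rw [add_sub_add_right_eq_sub, ← mulVec_sub, hv, hu, mulVec_add, mulVec_smul,
            mulVec_smul, mulVec_mulVec]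
  calc wnorm w2 (T x - T x')
      ≤ 1 / 2 * wnorm w2 ((A2 * A1) *ᵥ (x - x')) + 1 / 2 * wnorm w2 (A2 *ᵥ q) := by
        refine hout.trans ((wnorm_add_le hw2' _ _).trans_eq ?_)
        rw [wnorm_smul, wnorm_smul, abs_of_pos one_half_pos]
    _ ≤ 1 / 2 * (opNormW w0 w2 (A2 * A1) * wnorm w0 (x - x')) +
          1 / 2 * (opNormW w1 w2 A2 * (opNormW w0 w1 A1 * wnorm w0 (x - x'))) := by
        gcongr
        · exact wnorm_mulVec_le_opNormW hw0 hw2' _ _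
        · exact (wnorm_mulVec_le_opNormW hw1 hw2' A2 q).trans
            (mul_le_mul_of_nonneg_left hq_le (opNormW_nonneg hw1' hw2' A2))
    _ = _ := by ring
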